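/- arXiv:1410.4744 — 3 statements merged into one kernel-verified Lean document; each statement's English description precedes it below -/
import Mathlib

section
/- Let μ > 0, L > 0, α > 0, and ρ ∈ (0, 1). Define h̃ = sqrt( ((1 + ρ)/(ρμ))² + 1/(4μαL) ) − (1 + ρ)/(ρμ), and M(h) = (1/(hμ) + 4hLα)/(ρ − 4hLα(1 + ρ)) for h ∈ (0, ρ/(4Lα(1 + ρ))). Then h̃ lies in the open interval (0, ρ/(4Lα(1 + ρ))), and h̃ is the unique global minimizer of M on this interval: M(h̃) ≤ M(h) for all h ∈ (0, ρ/(4Lα(1 + ρ))), with equality only at h = h̃. -/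
/-!
With `p = 1/μ`, `q = 4Lα`, `r = ρ`, `s = 4Lα(1+ρ)` we have `M(h) = (p/h + q h)/(r - s h)`, and
`h̃ = √(c² + d) - c` with `c = ps/(qr)`, `d = p/q` is the positive root of `q r t² + 2 p s t = p r`,
the critical-point equation of `M`. For such a root `t`, clearing denominators gives
`h t (f(h) g(t) - f(t) g(h)) = (h - t)² (q r t + p s)` with `f(h) = p/h + q h`, `g(h) = r - s h`,
so `M(h) - M(t)` has the sign of `(h - t)²`. The root equation also forces `2 s t < r`.
-/

section QuadraticRoot

variable {c d : ℝ}

lemma sqrt_sq_add_sub_pos (hd : 0 < d) : 0 < √(c ^ 2 + d) - c := by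
  have : |c| < √(c ^ 2 + d) := by
    rw [← Real.sqrt_sq_eq_abs]
    exact Real.sqrt_lt_sqrt (sq_nonneg c) (lt_add_of_pos_right _ hd)
  linarith [le_abs_self c]

lemma sqrt_sq_add_sub_sq_add (hd : 0 ≤ d) :
    (√(c ^ 2 + d) - c) ^ 2 + 2 * c * (√(c ^ 2 + d) - c) = d := by
  have := Real.sq_sqrt (add_nonneg (sq_nonneg c) hd)
  linear_combination this

end QuadraticRoot

noncomputable def innerLoopLength (p q r s h : ℝ) : ℝ := (p / h + q * h) / (r - s * h)

section InnerLoopLength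

variable {p q r s t : ℝ}

lemma lt_div_of_root (hp : 0 < p) (hq : 0 < q) (hr : 0 < r) (hs : 0 < s) (ht : 0 < t)
    (hroot : q * r * t ^ 2 + 2 * p * s * t = p * r) : t < r / s := by
  rw [lt_div_iff₀ hs]
  nlinarith [mul_pos (mul_pos hq hr) (pow_pos ht 2), mul_pos (mul_pos hp hs) ht]

lemma mul_cross_sub_eq_of_root {h : ℝ} (hh : h ≠ 0) (ht : t ≠ 0)
    (hroot : q * r * t ^ 2 + 2 * p * s * t = p * r) :
    h * t * ((p / h + q * h) * (r - s * t) - (p / t + q * t) * (r - s * h)) =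
      (h - t) ^ 2 * (q * r * t + p * s) := by
  have e1 : h * t * (p / h) = p * t := by field_simp
  have e2 : h * t * (p / t) = p * h := by field_simp
  linear_combination (r - s * t) * e1 - (r - s * h) * e2 + (h - t) * hroot

lemma innerLoopLength_lt_of_root {h : ℝ} (hp : 0 < p) (hq : 0 < q) (hr : 0 < r) (hs : 0 < s)
    (ht : 0 < t) (hroot : q * r * t ^ 2 + 2 * p * s * t = p * r)
    (hh : 0 < h) (hhr : h < r / s) (hne : h ≠ t) :
    innerLoopLength p q r s t < innerLoopLength p q r s h := by
  have hgap {x : ℝ} (hx : x < r / s) : 0 < r - s * x := by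
    rw [lt_div_iff₀ hs] at hx
    linarith
  unfold innerLoopLength
  rw [div_lt_div_iff₀ (hgap (lt_div_of_root hp hq hr hs ht hroot)) (hgap hhr), ← sub_pos]
  have hpos : 0 < h * t * ((p / h + q * h) * (r - s * t) - (p / t + q * t) * (r - s * h)) := by
    rw [mul_cross_sub_eq_of_root hh.ne' ht.ne' hroot]
    have : 0 < (h - t) ^ 2 := by positivity [sub_ne_zero.mpr hne]
    positivity
  exact pos_of_mul_pos_right hpos (mul_pos hh ht).le

end InnerLoopLength

theorem mS2GD_optimal_stepsize_general (μ L α ρ : ℝ)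
    (hμ : 0 < μ) (hL : 0 < L) (hα : 0 < α) (hρ0 : 0 < ρ) :
    let ht : ℝ := Real.sqrt (((1 + ρ) / (ρ * μ)) ^ 2 + 1 / (4 * μ * α * L)) - (1 + ρ) / (ρ * μ)
    let M : ℝ → ℝ := fun h => (1 / (h * μ) + 4 * h * L * α) / (ρ - 4 * h * L * α * (1 + ρ))
    (0 < ht ∧ ht < ρ / (4 * L * α * (1 + ρ))) ∧
    (∀ h : ℝ, 0 < h → h < ρ / (4 * L * α * (1 + ρ)) → M ht ≤ M h) ∧
    (∀ h : ℝ, 0 < h → h < ρ / (4 * L * α * (1 + ρ)) → M h = M ht → h = ht) := by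
  intro ht M
  have hM (h : ℝ) : M h = innerLoopLength (1 / μ) (4 * L * α) ρ (4 * L * α * (1 + ρ)) h := by
    simp only [M, innerLoopLength]
    ring
  have hd : 0 < 1 / (4 * μ * α * L) := by positivity
  have hpos : 0 < ht := sqrt_sq_add_sub_pos hd
  have hroot : 4 * L * α * ρ * ht ^ 2 + 2 * (1 / μ) * (4 * L * α * (1 + ρ)) * ht = 1 / μ * ρ := by
    have hquad : ht ^ 2 + 2 * ((1 + ρ) / (ρ * μ)) * ht = 1 / (4 * μ * α * L) :=
      sqrt_sq_add_sub_sq_add hd.le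
    have hc : 4 * L * α * ρ * ((1 + ρ) / (ρ * μ)) = 1 / μ * (4 * L * α * (1 + ρ)) := by
      field_simp
    have hd' : 4 * L * α * ρ * (1 / (4 * μ * α * L)) = 1 / μ * ρ := by
      field_simp
    linear_combination (4 * L * α * ρ) * hquad - 2 * ht * hc + hd'
  have hlt {h : ℝ} (hh : 0 < h) (hhr : h < ρ / (4 * L * α * (1 + ρ))) (hne : h ≠ ht) :
      M ht < M h := by
    rw [hM, hM]
    exact innerLoopLength_lt_of_root (by positivity) (by positivity) hρ0 (by positivity) hpos hroot
      hh hhr hne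
  refine ⟨⟨hpos, lt_div_of_root (by positivity) (by positivity) hρ0 (by positivity) hpos hroot⟩,
    fun h hh hhr => ?_, fun h hh hhr heq => ?_⟩
  · rcases eq_or_ne h ht with rfl | hne
    exacts [le_rfl, (hlt hh hhr hne).le]
  · by_contra hne
    exact (hlt hh hhr hne).ne' heq

/-- The stepsize `h̃ = sqrt(((1+ρ)/(ρμ))² + 1/(4μαL)) − (1+ρ)/(ρμ)` lies in the open interval
`(0, ρ/(4Lα(1+ρ)))`, and it is the unique global minimizer of
`M(h) = (1/(hμ) + 4hLα)/(ρ − 4hLα(1+ρ))` on that interval. -/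
theorem mS2GD_optimal_stepsize (μ L α ρ : ℝ)
    (hμ : 0 < μ) (hL : 0 < L) (hα : 0 < α) (hρ0 : 0 < ρ) (hρ1 : ρ < 1) :
    let ht : ℝ := Real.sqrt (((1 + ρ) / (ρ * μ)) ^ 2 + 1 / (4 * μ * α * L)) - (1 + ρ) / (ρ * μ)
    let M : ℝ → ℝ := fun h => (1 / (h * μ) + 4 * h * L * α) / (ρ - 4 * h * L * α * (1 + ρ))
    (0 < ht ∧ ht < ρ / (4 * L * α * (1 + ρ))) ∧
    (∀ h : ℝ, 0 < h → h < ρ / (4 * L * α * (1 + ρ)) → M ht ≤ M h) ∧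
    (∀ h : ℝ, 0 < h → h < ρ / (4 * L * α * (1 + ρ)) → M h = M ht → h = ht) :=
  mS2GD_optimal_stepsize_general μ L α ρ hμ hL hα hρ0
end

section
/- Let μ > 0, L > 0, α > 0, and ρ ∈ (0, 1), and define h̃ = sqrt( ((1 + ρ)/(ρμ))² + 1/(4μαL) ) − (1 + ρ)/(ρμ) and M(h) = (1/(hμ) + 4hLα)/(ρ − 4hLα(1 + ρ)). Then M is strictly decreasing on the interval (0, h̃]: for 0 < h₁ < h₂ ≤ h̃ one has M(h₁) > M(h₂). -/
/-!
Clearing the denominator `hμ` and writing `a = (1 + ρ)/(ρμ)`, `k = 4μαL` gives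
`M(h) = g(h)/(ρμ)` with `g(h) = (1 + k h²)/(h − k a h²)`, and `h̃` is the positive root of
`k (t² + 2 a t) = 1`. Cross-multiplying,
`g(h₁) − g(h₂)` has the sign of `(h₂ − h₁) (1 − k (h₁ h₂ + a (h₁ + h₂)))`, and the last factor
is positive because `h₁ h₂ + a (h₁ + h₂) < h̃² + 2 a h̃ = 1/k`.
-/

open Set

lemma sq_add_two_mul_sqrt_sq_add_sub {a e : ℝ} (h : 0 ≤ a ^ 2 + e) :
    (√(a ^ 2 + e) - a) ^ 2 + 2 * a * (√(a ^ 2 + e) - a) = e := by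
  nlinarith [Real.sq_sqrt h]

lemma mul_add_mul_add_lt_sq_add_two_mul {a h₁ h₂ t : ℝ} (ha : 0 ≤ a) (h₁_pos : 0 < h₁)
    (h₁₂ : h₁ < h₂) (h₂t : h₂ ≤ t) :
    h₁ * h₂ + a * (h₁ + h₂) < t ^ 2 + 2 * a * t := by
  nlinarith [mul_le_mul_of_nonneg_left h₂t ha]

section

variable {k a t : ℝ}

lemma sub_mul_sq_pos_of_mem_Ioc (hk : 0 < k) (ha : 0 ≤ a) (ht : k * (t ^ 2 + 2 * a * t) = 1)
    {h : ℝ} (hh : h ∈ Ioc 0 t) : 0 < h - k * a * h ^ 2 := by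
  obtain ⟨h_pos, h_le⟩ := hh
  have hka : k * a * h ≤ k * a * t := mul_le_mul_of_nonneg_left h_le (by positivity)
  have h_lt_one : k * a * h < 1 := by nlinarith [mul_pos hk (pow_pos (h_pos.trans_le h_le) 2)]
  nlinarith

lemma strictAntiOn_one_add_mul_sq_div (hk : 0 < k) (ha : 0 ≤ a)
    (ht : k * (t ^ 2 + 2 * a * t) = 1) :
    StrictAntiOn (fun h => (1 + k * h ^ 2) / (h - k * a * h ^ 2)) (Ioc 0 t) := by
  intro h₁ hh₁ h₂ hh₂ h₁₂
  rw [div_lt_div_iff₀ (sub_mul_sq_pos_of_mem_Ioc hk ha ht hh₂)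
    (sub_mul_sq_pos_of_mem_Ioc hk ha ht hh₁)]
  have hfactor : (1 + k * h₁ ^ 2) * (h₂ - k * a * h₂ ^ 2) - (1 + k * h₂ ^ 2) * (h₁ - k * a * h₁ ^ 2)
      = (h₂ - h₁) * (1 - k * (h₁ * h₂ + a * (h₁ + h₂))) := by ring
  have hlt := mul_add_mul_add_lt_sq_add_two_mul ha hh₁.1 h₁₂ hh₂.2
  have hpos : 0 < (h₂ - h₁) * (1 - k * (h₁ * h₂ + a * (h₁ + h₂))) :=
    mul_pos (sub_pos.2 h₁₂) (by nlinarith [mul_lt_mul_of_pos_left hlt hk])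
  linarith

end

theorem mS2GD_M_strictly_decreasing_general (μ L α ρ : ℝ)
    (hμ : 0 < μ) (hL : 0 < L) (hα : 0 < α) (hρ0 : 0 < ρ) :
    let ht : ℝ := Real.sqrt (((1 + ρ) / (ρ * μ)) ^ 2 + 1 / (4 * μ * α * L)) - (1 + ρ) / (ρ * μ)
    let M : ℝ → ℝ := fun h => (1 / (h * μ) + 4 * h * L * α) / (ρ - 4 * h * L * α * (1 + ρ))
    ∀ h₁ h₂ : ℝ, 0 < h₁ → h₁ < h₂ → h₂ ≤ ht → M h₂ < M h₁ := by
  intro ht M h₁ h₂ h₁_pos h₁₂ h₂t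
  set a := (1 + ρ) / (ρ * μ)
  set k := 4 * μ * α * L
  have hk : 0 < k := by positivity
  have hρμ : 0 < ρ * μ := by positivity
  have ht_root : k * (ht ^ 2 + 2 * a * ht) = 1 := by
    rw [sq_add_two_mul_sqrt_sq_add_sub (by positivity)]
    exact mul_one_div_cancel hk.ne'
  have hM : ∀ h, 0 < h → M h = (1 + k * h ^ 2) / (h - k * a * h ^ 2) / (ρ * μ) := by
    intro h hh
    simp only [M, a, k]
    field_simp
  rw [hM h₁ h₁_pos, hM h₂ (h₁_pos.trans h₁₂)]
  have ha : 0 ≤ a := by positivity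
  exact div_lt_div_of_pos_right (strictAntiOn_one_add_mul_sq_div hk ha ht_root
    ⟨h₁_pos, h₁₂.le.trans h₂t⟩ ⟨h₁_pos.trans h₁₂, h₂t⟩ h₁₂) hρμ

/-- The map `M(h) = (1/(hμ) + 4hLα)/(ρ − 4hLα(1+ρ))` is strictly decreasing on `(0, h̃]`,
where `h̃ = sqrt(((1+ρ)/(ρμ))² + 1/(4μαL)) − (1+ρ)/(ρμ)`. -/
theorem mS2GD_M_strictly_decreasing (μ L α ρ : ℝ)
    (hμ : 0 < μ) (hL : 0 < L) (hα : 0 < α) (hρ0 : 0 < ρ) (hρ1 : ρ < 1) :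
    let ht : ℝ := Real.sqrt (((1 + ρ) / (ρ * μ)) ^ 2 + 1 / (4 * μ * α * L)) - (1 + ρ) / (ρ * μ)
    let M : ℝ → ℝ := fun h => (1 / (h * μ) + 4 * h * L * α) / (ρ - 4 * h * L * α * (1 + ρ))
    ∀ h₁ h₂ : ℝ, 0 < h₁ → h₁ < h₂ → h₂ ≤ ht → M h₂ < M h₁ :=
  mS2GD_M_strictly_decreasing_general μ L α ρ hμ hL hα hρ0
end

section
/- Let μ > 0, L > 0, α > 0, and ρ ∈ (0, 1) with ρ − 4α(1 + ρ) > 0, and define h̃ = sqrt( ((1 + ρ)/(ρμ))² + 1/(4μαL) ) − (1 + ρ)/(ρμ) and M(h) = (1/(hμ) + 4hLα)/(ρ − 4hLα(1 + ρ)). If h̃ ≥ 1/L, then the constrained minimum of M over h ∈ (0, 1/L] is attained at h = 1/L, and its value is M(1/L) = (L/μ + 4α)/(ρ − 4α(1 + ρ)); i.e., M(h) ≥ (L/μ + 4α)/(ρ − 4α(1 + ρ)) for all h ∈ (0, 1/L]. -/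
/-!
Clearing denominators, `M(h) - M(1/L)` is a positive multiple of
`(1 - hL) (ρ - 4α(1+ρ)(1+hL) - 4hαρμ)`. The second factor decreases in `h`, and squaring out
the square root in `h̃ ≥ 1/L` says exactly that it is nonnegative at `h = 1/L`.
-/

/-- The paper's `M(h)`. -/
noncomputable def innerLoopBound (μ L α ρ h : ℝ) : ℝ :=
  (1 / (h * μ) + 4 * h * L * α) / (ρ - 4 * h * L * α * (1 + ρ))

/-- The paper's `h̃`, the minimiser of `innerLoopBound` when the constraint `h ≤ 1/L` is ignored. -/
noncomputable def optimalStepsize (μ L α ρ : ℝ) : ℝ :=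
  √(((1 + ρ) / (ρ * μ)) ^ 2 + 1 / (4 * μ * α * L)) - (1 + ρ) / (ρ * μ)

theorem sq_add_two_mul_le_of_le_sqrt_sub {a c t : ℝ} (ha : 0 ≤ a) (ht : 0 < t)
    (h : t ≤ √(a ^ 2 + c) - a) : t ^ 2 + 2 * a * t ≤ c := by
  have hsq : (t + a) ^ 2 ≤ a ^ 2 + c := (Real.le_sqrt' (by positivity)).1 (by linarith)
  nlinarith [hsq]

theorem add_le_of_one_div_le_optimalStepsize {μ L α ρ : ℝ} (hμ : 0 < μ) (hL : 0 < L)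
    (hα : 0 < α) (hρ : 0 < ρ) (hht : 1 / L ≤ optimalStepsize μ L α ρ) :
    8 * α * (1 + ρ) + 4 * α * ρ * μ / L ≤ ρ := by
  have h := sq_add_two_mul_le_of_le_sqrt_sub (by positivity) (by positivity) hht
  have hscale : 0 < 4 * μ * α * ρ * L := by positivity
  calc 8 * α * (1 + ρ) + 4 * α * ρ * μ / L
      = 4 * μ * α * ρ * L * ((1 / L) ^ 2 + 2 * ((1 + ρ) / (ρ * μ)) * (1 / L)) := by
        field_simp; ring
    _ ≤ 4 * μ * α * ρ * L * (1 / (4 * μ * α * L)) := by gcongr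
    _ = ρ := by field_simp

theorem innerLoopBound_one_div (μ α ρ : ℝ) {L : ℝ} (hL : L ≠ 0) :
    innerLoopBound μ L α ρ (1 / L) = (L / μ + 4 * α) / (ρ - 4 * α * (1 + ρ)) := by
  unfold innerLoopBound
  field_simp

theorem innerLoopBound_one_div_le {μ L α ρ h : ℝ} (hμ : 0 < μ) (hL : 0 < L) (hα : 0 < α)
    (hρ : 0 < ρ) (hkey : 8 * α * (1 + ρ) + 4 * α * ρ * μ / L ≤ ρ) (h0 : 0 < h)
    (hhL : h ≤ 1 / L) :
    innerLoopBound μ L α ρ (1 / L) ≤ innerLoopBound μ L α ρ h := by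
  have hhL' : h * L ≤ 1 := (le_div_iff₀ hL).1 hhL
  have hhLα : h * L * (4 * α * (1 + ρ)) ≤ 4 * α * (1 + ρ) := by
    simpa using mul_le_mul_of_nonneg_right hhL' (by positivity : 0 ≤ 4 * α * (1 + ρ))
  have hgap : 0 ≤ ρ - 4 * α * (1 + ρ) * (1 + h * L) - 4 * h * α * ρ * μ := by
    have hμh : 4 * h * α * ρ * μ ≤ 4 * α * ρ * μ / L := by
      rw [le_div_iff₀ hL]; nlinarith [mul_pos (mul_pos hα hρ) hμ]
    linarith
  have hD1 : 0 < ρ - 4 * α * (1 + ρ) := by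
    have : 0 < 4 * α * ρ * μ / L := by positivity
    nlinarith [mul_pos hα hρ]
  have hDh : 0 < ρ - 4 * h * L * α * (1 + ρ) := by linarith
  have hdiff : (1 / (h * μ) + 4 * h * L * α) * (ρ - 4 * α * (1 + ρ))
      - (L / μ + 4 * α) * (ρ - 4 * h * L * α * (1 + ρ))
      = (1 - h * L) * (ρ - 4 * α * (1 + ρ) * (1 + h * L) - 4 * h * α * ρ * μ) / (h * μ) := by
    field_simp
    ring
  rw [innerLoopBound_one_div μ α ρ hL.ne', innerLoopBound, div_le_div_iff₀ hD1 hDh]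
  have hdiff_nonneg :
      0 ≤ (1 - h * L) * (ρ - 4 * α * (1 + ρ) * (1 + h * L) - 4 * h * α * ρ * μ) / (h * μ) :=
    div_nonneg (mul_nonneg (by linarith) hgap) (by positivity)
  linarith

theorem mS2GD_constrained_optimal_stepsize_general (μ L α ρ : ℝ)
    (hμ : 0 < μ) (hL : 0 < L) (hα : 0 < α) (hρ0 : 0 < ρ)
    (hht : 1 / L ≤ Real.sqrt (((1 + ρ) / (ρ * μ)) ^ 2 + 1 / (4 * μ * α * L))
            - (1 + ρ) / (ρ * μ)) :
    let M : ℝ → ℝ := fun h => (1 / (h * μ) + 4 * h * L * α) / (ρ - 4 * h * L * α * (1 + ρ))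
    (∀ h : ℝ, 0 < h → h ≤ 1 / L → M (1 / L) ≤ M h) ∧
    M (1 / L) = (L / μ + 4 * α) / (ρ - 4 * α * (1 + ρ)) := by
  have hkey := add_le_of_one_div_le_optimalStepsize hμ hL hα hρ0 hht
  exact ⟨fun h h0 hhL => innerLoopBound_one_div_le hμ hL hα hρ0 hkey h0 hhL,
    innerLoopBound_one_div μ α ρ hL.ne'⟩

/-- If `ρ − 4α(1+ρ) > 0` and the unconstrained optimal stepsize
`h̃ = sqrt(((1+ρ)/(ρμ))² + 1/(4μαL)) − (1+ρ)/(ρμ)` satisfies `h̃ ≥ 1/L`, then the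
constrained minimum of `M(h) = (1/(hμ) + 4hLα)/(ρ − 4hLα(1+ρ))` over `h ∈ (0, 1/L]` is
attained at `h = 1/L` with value `(L/μ + 4α)/(ρ − 4α(1+ρ))`. -/
theorem mS2GD_constrained_optimal_stepsize (μ L α ρ : ℝ)
    (hμ : 0 < μ) (hL : 0 < L) (hα : 0 < α) (hρ0 : 0 < ρ) (hρ1 : ρ < 1)
    (hfeas : 0 < ρ - 4 * α * (1 + ρ))
    (hht : 1 / L ≤ Real.sqrt (((1 + ρ) / (ρ * μ)) ^ 2 + 1 / (4 * μ * α * L))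
            - (1 + ρ) / (ρ * μ)) :
    let M : ℝ → ℝ := fun h => (1 / (h * μ) + 4 * h * L * α) / (ρ - 4 * h * L * α * (1 + ρ))
    (∀ h : ℝ, 0 < h → h ≤ 1 / L → M (1 / L) ≤ M h) ∧
    M (1 / L) = (L / μ + 4 * α) / (ρ - 4 * α * (1 + ρ)) :=
  mS2GD_constrained_optimal_stepsize_general μ L α ρ hμ hL hα hρ0 hht
end
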